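/- arXiv:2002.01907 — 3 statements merged into one kernel-verified Lean document; each statement's English description precedes it below -/
import Mathlib

section
/- Let α, β, a, b be real numbers with α ≠ β, αβ ≠ 0, a² = α/(α−β) and b² = β/(β−α). If real numbers p, q, r, s satisfy the two equations 0 = βp − αq + 2ab(α−β)r and 0 = βr − αs − 2ab(β−α)q, then necessarily q = −(β²p + 2abα(α−β)s)/(3αβ) and r = (2abβ(α−β)p − α²s)/(3αβ). -/
/-- Solving the linear system from the Codazzi equation: if
`0 = βp − αq + 2ab(α−β)r` and `0 = βr − αs − 2ab(β−α)q`, then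
`q = −(β²p + 2abα(α−β)s)/(3αβ)` and `r = (2abβ(α−β)p − α²s)/(3αβ)`. -/
theorem statement8 (α β a b : ℝ) (hαβ : α ≠ β) (hab : α * β ≠ 0)
    (ha : a ^ 2 = α / (α - β)) (hb : b ^ 2 = β / (β - α))
    (p q r s : ℝ)
    (h1 : 0 = β * p - α * q + 2 * a * b * (α - β) * r)
    (h2 : 0 = β * r - α * s - 2 * a * b * (β - α) * q) :
    q = -(β ^ 2 * p + 2 * a * b * α * (α - β) * s) / (3 * α * β) ∧
    r = (2 * a * b * β * (α - β) * p - α ^ 2 * s) / (3 * α * β) := by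
  have hd : α - β ≠ 0 := sub_ne_zero.mpr hαβ
  have hd' : β - α ≠ 0 := sub_ne_zero.mpr (Ne.symm hαβ)
  have ha2 : a ^ 2 * (α - β) = α := by rw [ha]; field_simp
  have hb2 : b ^ 2 * (β - α) = β := by rw [hb]; field_simp
  have hprod : (a ^ 2 * (α - β)) * (b ^ 2 * (β - α)) = α * β := by rw [ha2, hb2]
  have hK : (2 * a * b * (α - β)) ^ 2 = -4 * (α * β) := by
    linear_combination (-4) * hprod
  have h3 : (3 : ℝ) * α * β ≠ 0 := by
    intro h; apply hab; nlinarith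
  constructor
  · rw [eq_div_iff h3]
    linear_combination (-β) * h1 + (2 * a * b * (α - β)) * h2 + q * hK
  · rw [eq_div_iff h3]
    linear_combination (2 * a * b * (α - β)) * h1 + α * h2 + r * hK
end

section
/- Let α, β, a, b be real numbers with αβ ≠ 0, α² ≠ β², a² = α/(α−β) and b² = β/(β−α). If real numbers u, v satisfy β(3α²−β²)u + 2abα²(α−β)v = 0 and −2abβ²(α−β)u + α(3β²−α²)v = 0, then u = v = 0. -/
/-- The homogeneous linear system in `U(α)`, `V(α)` from the proof of
Proposition 3.2 has only the trivial solution. -/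
theorem statement10 (α β a b : ℝ) (hab : α * β ≠ 0) (hαβ : α ^ 2 ≠ β ^ 2)
    (ha : a ^ 2 = α / (α - β)) (hb : b ^ 2 = β / (β - α))
    (u v : ℝ)
    (h1 : β * (3 * α ^ 2 - β ^ 2) * u + 2 * a * b * α ^ 2 * (α - β) * v = 0)
    (h2 : -(2 * a * b * β ^ 2 * (α - β)) * u + α * (3 * β ^ 2 - α ^ 2) * v = 0) :
    u = 0 ∧ v = 0 := by
  have hne : α - β ≠ 0 := by
    intro h
    apply hαβ
    have : α = β := by linarith
    rw [this]
  have hba : β - α ≠ 0 := fun h => hne (by linarith)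
  have hc2 : (a * b) ^ 2 * (α - β) ^ 2 = -(α * β) := by
    have : (a * b) ^ 2 = a ^ 2 * b ^ 2 := by ring
    rw [this, ha, hb]
    field_simp
    ring
  have hdet : (-3) * α * β * (α ^ 2 - β ^ 2) ^ 2 ≠ 0 := by
    have hd : α ^ 2 - β ^ 2 ≠ 0 := sub_ne_zero.mpr hαβ
    have hα : α ≠ 0 := left_ne_zero_of_mul hab
    have hβ : β ≠ 0 := right_ne_zero_of_mul hab
    exact mul_ne_zero (mul_ne_zero (mul_ne_zero (by norm_num) hα) hβ) (pow_ne_zero _ hd)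
  have hu : (-3) * α * β * (α ^ 2 - β ^ 2) ^ 2 * u = 0 := by
    linear_combination α * (3 * β ^ 2 - α ^ 2) * h1 - 2 * a * b * α ^ 2 * (α - β) * h2
      - 4 * α ^ 2 * β ^ 2 * u * hc2
  have hv : (-3) * α * β * (α ^ 2 - β ^ 2) ^ 2 * v = 0 := by
    linear_combination 2 * a * b * β ^ 2 * (α - β) * h1 + β * (3 * α ^ 2 - β ^ 2) * h2
      - 4 * α ^ 2 * β ^ 2 * v * hc2
  exact ⟨(mul_eq_zero.mp hu).resolve_left hdet, (mul_eq_zero.mp hv).resolve_left hdet⟩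
end

section
/- Let α, β, a, b, c be real numbers with αβ ≠ 0, α ≠ β, α + β ≠ 0, a² = α/(α−β) and b² = β/(β−α). If real numbers t and s satisfy s = −αt/β and t = b(α−β)(aβ(4αβ−c) + 2bαs)/(2β²), then t = abβ(c−4αβ)/(2(α+β)). -/
/-- If `s = −αt/β` and `t = b(α−β)(aβ(4αβ−c) + 2bαs)/(2β²)`, then
`t = abβ(c−4αβ)/(2(α+β))` (the formula for `A(α)` in Proposition 3.2). -/
theorem statement11 (α β a b c : ℝ) (hab : α * β ≠ 0) (hαβ : α ≠ β)
    (hsum : α + β ≠ 0)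
    (ha : a ^ 2 = α / (α - β)) (hb : b ^ 2 = β / (β - α))
    (t s : ℝ)
    (hs : s = -(α * t) / β)
    (ht : t = b * (α - β) * (a * β * (4 * α * β - c) + 2 * b * α * s) / (2 * β ^ 2)) :
    t = a * b * β * (c - 4 * α * β) / (2 * (α + β)) := by
  have hα : α ≠ 0 := left_ne_zero_of_mul hab
  have hβ : β ≠ 0 := right_ne_zero_of_mul hab
  have hd : β - α ≠ 0 := sub_ne_zero.mpr (Ne.symm hαβ)
  subst hs
  field_simp at hb ht ⊢
  have key : (t * (2 * (α + β)) - a * b * β * (c - 4 * α * β)) * (β * (β - α)) = 0 := by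
    linear_combination ht + 2 * α ^ 2 * t * hb
  rcases mul_eq_zero.mp key with h | h
  · linarith [sub_eq_zero.mp h]
  · exact absurd h (mul_ne_zero hβ hd)
end
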